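/- Let α : ℤ/nℤ → ℝ with ∑_k α_k = n-1 and c_k = ∑_l ω^{-kl} α_l its DFT. Then α satisfies the cyclic autocorrelation conditions ∑_{k=0}^{n-1} α_{i-k} α_{j-k} = δ_{ij} + n - 2 for all i, j if and only if |c_k| = 1 for all k = 1,...,n-1. -/

import Mathlib

/-!
The autocorrelation conditions say exactly that the cyclic autocorrelation
`A d = ∑ m, α (d + m) * α m` equals `δ_d + (n - 2)`. By Wiener–Khinchin the DFT of `A` is
`|c_k|²`, while the DFT of `δ + (n - 2)` is `1 + n (n - 2) δ_k`; since the DFT is injective the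
conditions are equivalent to `|c_k|² = 1` for `k ≠ 0` together with `|c_0|² = (n - 1)²`, and the
latter is automatic because `c_0 = ∑ α = n - 1`.
-/

open Finset ComplexConjugate

namespace ZMod

variable {N : ℕ} [NeZero N]

noncomputable def autocorr (f : ZMod N → ℂ) (d : ZMod N) : ℂ :=
  ∑ m, f (d + m) * conj (f m)

lemma dft_autocorr (f : ZMod N → ℂ) (k : ZMod N) : 𝓕 (autocorr f) k = ‖𝓕 f k‖ ^ 2 := by
  have hshift (m : ZMod N) : ∑ d, stdAddChar (-(d * k)) * f (d + m) =
      ∑ j, stdAddChar (-(j * k)) * f j * conj (stdAddChar (-(m * k))) :=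
    Fintype.sum_equiv (Equiv.addRight m) _ _ fun d ↦ by
      rw [Equiv.coe_addRight, ← AddChar.map_neg_eq_conj, neg_neg, mul_right_comm,
        ← AddChar.map_add_eq_mul]
      ring_nf
  calc 𝓕 (autocorr f) k
      = ∑ m, (∑ d, stdAddChar (-(d * k)) * f (d + m)) * conj (f m) := by
        simp only [dft_apply, autocorr, smul_eq_mul, mul_sum, sum_mul, mul_assoc]
        exact sum_comm
    _ = 𝓕 f k * conj (𝓕 f k) := by
        simp only [hshift, dft_apply, smul_eq_mul, map_sum, map_mul, mul_sum, sum_mul, mul_assoc]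
    _ = ‖𝓕 f k‖ ^ 2 := Complex.mul_conj' _

lemma dft_const (b : ℂ) (k : ZMod N) : 𝓕 (fun _ ↦ b) k = if k = 0 then N * b else 0 := by
  simp only [dft_apply, smul_eq_mul, ← sum_mul, ← mul_neg,
    AddChar.sum_mulShift _ (isPrimitive_stdAddChar N), neg_eq_zero, ZMod.card]
  split_ifs <;> simp

lemma dft_single_zero (a : ℂ) (k : ZMod N) : 𝓕 (Pi.single 0 a) k = a := by
  simp [dft_apply, Pi.single_apply]

lemma autocorr_eq_single_add_const_iff (f : ZMod N → ℂ) (a b : ℂ) :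
    autocorr f = Pi.single 0 a + (fun _ ↦ b) ↔
      ∀ k, (‖𝓕 f k‖ ^ 2 : ℂ) = a + if k = 0 then N * b else 0 := by
  rw [← dft.injective.eq_iff, funext_iff]
  simp only [map_add, Pi.add_apply, dft_autocorr, dft_single_zero, dft_const]

lemma stdAddChar_eq_exp_pow_val (j : ZMod N) :
    stdAddChar j = Complex.exp (2 * Real.pi * Complex.I / N) ^ j.val := by
  rw [stdAddChar_apply, toCircle_apply, ← Complex.exp_nat_mul]
  ring_nf

lemma sum_mul_sub_eq_sum_add_mul {R : Type*} [CommSemiring R] (α : ZMod N → R) (i j : ZMod N) :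
    ∑ k, α (i - k) * α (j - k) = ∑ m, α (i - j + m) * α m :=
  Fintype.sum_equiv (Equiv.subLeft j) _ _ fun k ↦ by simp

lemma autocorr_ofReal (α : ZMod N → ℝ) (d : ZMod N) :
    autocorr (fun l ↦ (α l : ℂ)) d = ∑ m, α (d + m) * α m := by
  simp [autocorr]

lemma autocorr_ofReal_eq_single_add_const_iff (α : ZMod N → ℝ) (a b : ℝ) :
    autocorr (fun l ↦ (α l : ℂ)) = Pi.single 0 (a : ℂ) + (fun _ ↦ (b : ℂ)) ↔
      ∀ i j, ∑ k, α (i - k) * α (j - k) = (if i = j then a else 0) + b := by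
  have hsingle (d : ZMod N) :
      (Pi.single 0 (a : ℂ) : ZMod N → ℂ) d = ((Pi.single 0 a : ZMod N → ℝ) d : ℂ) := by
    rw [Pi.single_apply, Pi.single_apply]; split_ifs <;> simp
  simp only [funext_iff, autocorr_ofReal, Pi.add_apply, hsingle, ← Complex.ofReal_add,
    Complex.ofReal_inj, Pi.single_apply, sum_mul_sub_eq_sum_add_mul]
  refine ⟨fun h i j ↦ ?_, fun h d ↦ ?_⟩
  · simpa [sub_eq_zero] using h (i - j)
  · simpa using h d 0

end ZMod

open Finset ZMod in
theorem stmt_4_general (n : ℕ) [NeZero n] (α : ZMod n → ℝ) (c : ZMod n → ℂ)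
    (hc : ∀ k : ZMod n,
      c k = ∑ l : ZMod n,
        Complex.exp (2 * Real.pi * Complex.I / n) ^ (-(k * l)).val * (α l : ℂ))
    (hsum : ∑ k : ZMod n, α k = n - 1) :
    (∀ i j : ZMod n,
        ∑ k : ZMod n, α (i - k) * α (j - k) = (if i = j then 1 else 0) + n - 2) ↔
      (∀ k : ZMod n, k ≠ 0 → ‖c k‖ = 1) := by
  set f : ZMod n → ℂ := fun l ↦ α l
  have hcf : c = 𝓕 f := funext fun k ↦ by
    simp [hc, dft_apply, stdAddChar_eq_exp_pow_val, f, mul_comm]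
  have hc0 : ‖c 0‖ ^ 2 = 1 + n * (n - 2) := by
    rw [hcf, dft_apply_zero, ← Complex.ofReal_sum, hsum, Complex.norm_real, Real.norm_eq_abs,
      sq_abs]
    ring
  calc (∀ i j : ZMod n, ∑ k, α (i - k) * α (j - k) = (if i = j then 1 else 0) + n - 2)
      ↔ autocorr f = Pi.single 0 1 + fun _ ↦ (n - 2 : ℂ) := by
        simpa only [add_sub_assoc, Complex.ofReal_one, Complex.ofReal_sub, Complex.ofReal_natCast,
          Complex.ofReal_ofNat] using (autocorr_ofReal_eq_single_add_const_iff α 1 (n - 2)).symm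
    _ ↔ ∀ k, (‖𝓕 f k‖ ^ 2 : ℂ) = 1 + if k = 0 then (n : ℂ) * (n - 2) else 0 :=
        autocorr_eq_single_add_const_iff f 1 _
    _ ↔ ∀ k, k ≠ 0 → ‖c k‖ = 1 := by
        rw [← hcf]
        refine forall_congr' fun k ↦ ?_
        rcases eq_or_ne k 0 with rfl | hk
        · rw [if_pos rfl]
          exact iff_of_true (mod_cast hc0) fun h ↦ absurd rfl h
        · rw [if_neg hk, add_zero, ← Complex.ofReal_pow, Complex.ofReal_eq_one,
            pow_eq_one_iff_of_nonneg (norm_nonneg _) two_ne_zero]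
          exact ⟨fun h _ ↦ h, fun h ↦ h hk⟩

theorem stmt_4 (n : ℕ) [NeZero n] (hn : 2 ≤ n) (α : ZMod n → ℝ) (c : ZMod n → ℂ)
    (hc : ∀ k : ZMod n,
      c k = ∑ l : ZMod n,
        Complex.exp (2 * Real.pi * Complex.I / n) ^ (-(k * l)).val * (α l : ℂ))
    (hsum : ∑ k : ZMod n, α k = n - 1) :
    (∀ i j : ZMod n,
        ∑ k : ZMod n, α (i - k) * α (j - k) = (if i = j then 1 else 0) + n - 2) ↔
      (∀ k : ZMod n, k ≠ 0 → ‖c k‖ = 1) :=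
  stmt_4_general n α c hc hsum
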